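/- For u ∈ C^1(R^3; R^3) with bounded gradient, any r > 0, and q with 1 < q ≤ ∞, the function π(x) = ∫_{|z|≤2r} |u(x+z) − u(x)|^2 / |z|^3 dz satisfies ‖π‖_{L^q(R^3)} ≤ C_q r^2 ‖∇u‖_{L^{2q}(R^3)}^2 for a constant C_q depending only on q. -/

import Mathlib

/-!
By the fundamental theorem of calculus and Cauchy–Schwarz on `[0, 1]`,
`|u(x+z) - u(x)|² ≤ |z|² ∫₀¹ |∇u(x+tz)|² dt`, so `π(x) ≤ ∫ |∇u|²(x + tz) dν(z, t)` for the
measure `ν = |z|⁻¹ dz dt` on `B(0, 2r) × (0, 1]`. Thus `π` is dominated by a `ν`-superposition of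
translates of `|∇u|²`; Jensen's inequality and translation invariance of Lebesgue measure give
`‖π‖_q ≤ ν(total) · ‖|∇u|²‖_q = ν(total) · ‖∇u‖²_{2q}` (for `q = ∞`, use that the continuous
`|∇u|` is bounded everywhere by its essential supremum). Scaling `z ↦ 2r z` shows that
`ν(total) = 4r² ∫_{|z| ≤ 1} |z|⁻¹ dz`, which is finite in dimension `3`.
-/

open MeasureTheory Metric Real ENNReal NNReal Set Module

theorem rpow_lintegral_le_measure_rpow_mul_lintegral_rpow {α : Type*} [MeasurableSpace α]
    {μ : Measure α} {f : α → ℝ≥0∞} (hf : AEMeasurable f μ) {p : ℝ} (hp : 1 ≤ p) :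
    (∫⁻ a, f a ∂μ) ^ p ≤ μ univ ^ (p - 1) * ∫⁻ a, f a ^ p ∂μ := by
  have hp0 : 0 < p := zero_lt_one.trans_le hp
  have holder := ENNReal.lintegral_mul_norm_pow_le (hf.pow_const p) aemeasurable_const
    (one_div_nonneg.2 hp0.le) (sub_nonneg.2 ((div_le_one hp0).2 hp)) (add_sub_cancel _ _)
    (g := fun _ => 1)
  simp only [ENNReal.one_rpow, mul_one, lintegral_one, one_div,
    ENNReal.rpow_rpow_inv hp0.ne'] at holder
  calc (∫⁻ a, f a ∂μ) ^ p
      ≤ ((∫⁻ a, f a ^ p ∂μ) ^ p⁻¹ * μ univ ^ (1 - p⁻¹)) ^ p := by gcongr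
    _ = μ univ ^ (p - 1) * ∫⁻ a, f a ^ p ∂μ := by
      rw [ENNReal.mul_rpow_of_nonneg _ _ hp0.le, ENNReal.rpow_inv_rpow hp0.ne', ← ENNReal.rpow_mul,
        sub_mul, inv_mul_cancel₀ hp0.ne', one_mul, mul_comm]

theorem Continuous.enorm_le_eLpNorm_top {X ε : Type*} [TopologicalSpace X] [MeasurableSpace X]
    {μ : Measure X} [μ.IsOpenPosMeasure] [TopologicalSpace ε] [ContinuousENorm ε] {f : X → ε}
    (hf : Continuous f) (x : X) : ‖f x‖ₑ ≤ eLpNorm f ∞ μ := by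
  have hclosed : IsClosed {x | ‖f x‖ₑ ≤ eLpNorm f ∞ μ} := isClosed_le hf.enorm continuous_const
  have hdense : Dense {x | ‖f x‖ₑ ≤ eLpNorm f ∞ μ} := by
    simpa [eLpNorm_exponent_top] using Measure.dense_of_ae (ae_le_eLpNormEssSup (f := f) (μ := μ))
  have hx : x ∈ closure {x | ‖f x‖ₑ ≤ eLpNorm f ∞ μ} := hdense.closure_eq ▸ mem_univ x
  rwa [hclosed.closure_eq] at hx

theorem eLpNorm_enorm_sq {α ε : Type*} [MeasurableSpace α] {μ : Measure α} [ENorm ε]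
    (f : α → ε) (p : ℝ≥0∞) :
    eLpNorm (fun x => ‖f x‖ₑ ^ 2) p μ = eLpNorm f (2 * p) μ ^ 2 := by
  simp only [← ENNReal.rpow_two]
  rw [eLpNorm_enorm_rpow _ two_pos, mul_comm, ENNReal.ofReal_ofNat]

section Translates

variable {E β : Type*} [MeasurableSpace E] [MeasurableSpace β] {μ : Measure E} {ν : Measure β}
  {F : E → ℝ≥0∞} {τ : β → E}

theorem eLpNorm_lintegral_comp_add_le_of_ne_top [AddGroup E] [MeasurableAdd₂ E]
    [μ.IsAddRightInvariant] [SFinite μ] [SFinite ν] (hF : Measurable F) (hτ : Measurable τ)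
    {p : ℝ≥0∞} (hp1 : 1 ≤ p) (hp : p ≠ ∞) :
    eLpNorm (fun x => ∫⁻ y, F (x + τ y) ∂ν) p μ ≤ ν univ * eLpNorm F p μ := by
  have hp0 : p ≠ 0 := (zero_lt_one.trans_le hp1).ne'
  set P := p.toReal
  have hP : 1 ≤ P := by simpa using ENNReal.toReal_mono hp hp1
  have hP0 : 0 < P := zero_lt_one.trans_le hP
  have hmeas : Measurable fun w : E × β => F (w.1 + τ w.2) :=
    hF.comp (measurable_fst.add (hτ.comp measurable_snd))
  have hsplit : ν univ ^ P = ν univ ^ (P - 1) * ν univ := by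
    simpa using ENNReal.rpow_add_of_nonneg (x := ν univ) (P - 1) 1 (by linarith) zero_le_one
  have key : ∫⁻ x, (∫⁻ y, F (x + τ y) ∂ν) ^ P ∂μ ≤ ν univ ^ P * ∫⁻ x, F x ^ P ∂μ :=
    calc ∫⁻ x, (∫⁻ y, F (x + τ y) ∂ν) ^ P ∂μ
        ≤ ∫⁻ x, ν univ ^ (P - 1) * ∫⁻ y, F (x + τ y) ^ P ∂ν ∂μ :=
          lintegral_mono fun x => rpow_lintegral_le_measure_rpow_mul_lintegral_rpow
            (hmeas.comp measurable_prodMk_left).aemeasurable hP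
      _ = ν univ ^ (P - 1) * ∫⁻ y, ∫⁻ x, F (x + τ y) ^ P ∂μ ∂ν := by
          rw [lintegral_const_mul'' _ ((hmeas.pow_const P).lintegral_prod_right').aemeasurable,
            lintegral_lintegral_swap (hmeas.pow_const P).aemeasurable]
      _ = ν univ ^ P * ∫⁻ x, F x ^ P ∂μ := by
          simp_rw [lintegral_add_right_eq_self (fun x => F x ^ P), lintegral_const, hsplit]
          ring
  simp only [eLpNorm_eq_lintegral_rpow_enorm_toReal hp0 hp, enorm_eq_self]
  calc (∫⁻ x, (∫⁻ y, F (x + τ y) ∂ν) ^ P ∂μ) ^ (1 / P)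
      ≤ (ν univ ^ P * ∫⁻ x, F x ^ P ∂μ) ^ (1 / P) := by gcongr
    _ = ν univ * (∫⁻ x, F x ^ P ∂μ) ^ (1 / P) := by
      rw [ENNReal.mul_rpow_of_nonneg _ _ (by positivity), ← ENNReal.rpow_mul,
        mul_one_div_cancel hP0.ne', ENNReal.rpow_one]

theorem eLpNorm_top_lintegral_comp_add_le [TopologicalSpace E] [Add E] [μ.IsOpenPosMeasure]
    (hF : Continuous F) :
    eLpNorm (fun x => ∫⁻ y, F (x + τ y) ∂ν) ∞ μ ≤ ν univ * eLpNorm F ∞ μ := by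
  rw [eLpNorm_exponent_top]
  refine eLpNormEssSup_le_of_ae_enorm_bound (ae_of_all _ fun x => ?_)
  calc ‖∫⁻ y, F (x + τ y) ∂ν‖ₑ
      ≤ ∫⁻ _, eLpNorm F ∞ μ ∂ν := lintegral_mono fun y => hF.enorm_le_eLpNorm_top (x + τ y)
    _ = ν univ * eLpNorm F ∞ μ := by rw [lintegral_const, mul_comm]

theorem Continuous.eLpNorm_lintegral_comp_add_le [TopologicalSpace E] [AddGroup E]
    [OpensMeasurableSpace E] [MeasurableAdd₂ E] [μ.IsAddRightInvariant] [SFinite μ]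
    [μ.IsOpenPosMeasure] [SFinite ν] (hF : Continuous F) (hτ : Measurable τ) {p : ℝ≥0∞}
    (hp : 1 ≤ p) :
    eLpNorm (fun x => ∫⁻ y, F (x + τ y) ∂ν) p μ ≤ ν univ * eLpNorm F p μ := by
  rcases eq_or_ne p ∞ with rfl | hp_top
  · exact eLpNorm_top_lintegral_comp_add_le hF
  · exact eLpNorm_lintegral_comp_add_le_of_ne_top hF.measurable hτ hp hp_top

end Translates

section DifferenceQuotient

variable {E F : Type*} [NormedAddCommGroup E] [NormedSpace ℝ E] [NormedAddCommGroup F]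
  [NormedSpace ℝ F] [CompleteSpace F] {u : E → F}

theorem ContDiff.enorm_map_add_sub_le (hu : ContDiff ℝ 1 u) (x z : E) :
    ‖u (x + z) - u x‖ₑ ≤ (∫⁻ t in Ioc (0 : ℝ) 1, ‖fderiv ℝ u (x + t • z)‖ₑ) * ‖z‖ₑ := by
  have hderiv : ∀ t : ℝ, HasDerivAt (fun s : ℝ => u (x + s • z)) (fderiv ℝ u (x + t • z) z) t :=
    fun t => ((hu.differentiable one_ne_zero _).hasFDerivAt).comp_hasDerivAt t
      (by simpa using ((hasDerivAt_id t).smul_const z).const_add x)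
  have hcont : Continuous fun t : ℝ => fderiv ℝ u (x + t • z) z :=
    ((hu.continuous_fderiv one_ne_zero).comp (by fun_prop)).clm_apply continuous_const
  have hftc := intervalIntegral.integral_eq_sub_of_hasDerivAt (fun t _ => hderiv t)
    (hcont.intervalIntegrable 0 1)
  simp only [one_smul, zero_smul, add_zero, intervalIntegral.integral_of_le zero_le_one] at hftc
  calc ‖u (x + z) - u x‖ₑ
      ≤ ∫⁻ t in Ioc (0 : ℝ) 1, ‖fderiv ℝ u (x + t • z) z‖ₑ :=
        hftc ▸ enorm_integral_le_lintegral_enorm _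
    _ ≤ ∫⁻ t in Ioc (0 : ℝ) 1, ‖fderiv ℝ u (x + t • z)‖ₑ * ‖z‖ₑ :=
        lintegral_mono fun t => ContinuousLinearMap.le_opENorm _ _
    _ = _ := lintegral_mul_const' _ _ enorm_ne_top

theorem ContDiff.enorm_map_add_sub_sq_le (hu : ContDiff ℝ 1 u) (x z : E) :
    ‖u (x + z) - u x‖ₑ ^ 2 ≤ (∫⁻ t in Ioc (0 : ℝ) 1, ‖fderiv ℝ u (x + t • z)‖ₑ ^ 2) * ‖z‖ₑ ^ 2 := by
  have hmeas : AEMeasurable (fun t : ℝ => ‖fderiv ℝ u (x + t • z)‖ₑ) (volume.restrict (Ioc 0 1)) :=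
    ((hu.continuous_fderiv one_ne_zero).comp (by fun_prop)).enorm.aemeasurable
  have hjensen := rpow_lintegral_le_measure_rpow_mul_lintegral_rpow hmeas one_le_two
  simp only [Measure.restrict_apply_univ, Real.volume_Ioc, sub_zero, ENNReal.ofReal_one,
    ENNReal.one_rpow, one_mul, ENNReal.rpow_two] at hjensen
  calc ‖u (x + z) - u x‖ₑ ^ 2
      ≤ ((∫⁻ t in Ioc (0 : ℝ) 1, ‖fderiv ℝ u (x + t • z)‖ₑ) * ‖z‖ₑ) ^ 2 := by
        gcongr; exact hu.enorm_map_add_sub_le x z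
    _ ≤ _ := by rw [mul_pow]; gcongr

theorem ContDiff.ofReal_norm_map_add_sub_sq_div_cube_le (hu : ContDiff ℝ 1 u) (x z : E) :
    ENNReal.ofReal (‖u (x + z) - u x‖ ^ 2 / ‖z‖ ^ 3) ≤
      ENNReal.ofReal ‖z‖⁻¹ * ∫⁻ t in Ioc (0 : ℝ) 1, ‖fderiv ℝ u (x + t • z)‖ₑ ^ 2 := by
  rcases eq_or_ne z 0 with rfl | hz
  · simp
  have hz' : 0 < ‖z‖ := norm_pos_iff.2 hz
  calc ENNReal.ofReal (‖u (x + z) - u x‖ ^ 2 / ‖z‖ ^ 3)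
      = ENNReal.ofReal ‖z‖⁻¹ * (‖u (x + z) - u x‖ₑ ^ 2 / ‖z‖ₑ ^ 2) := by
        rw [← ofReal_norm, ← ofReal_norm, ← ENNReal.ofReal_pow (norm_nonneg _),
          ← ENNReal.ofReal_pow (norm_nonneg _), ← ENNReal.ofReal_div_of_pos (by positivity),
          ← ENNReal.ofReal_mul (by positivity)]
        congr 1
        field_simp
    _ ≤ _ := by
        gcongr
        exact ENNReal.div_le_of_le_mul (hu.enorm_map_add_sub_sq_le x z)

end DifferenceQuotient

section InvNormKernel

variable {E : Type*} [NormedAddCommGroup E] [MeasurableSpace E] [BorelSpace E]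

theorem lintegral_closedBall_ofReal_inv_norm_eq [NormedSpace ℝ E] [FiniteDimensional ℝ E]
    [Nontrivial E] (μ : Measure E)
    [μ.IsAddHaarMeasure] {R : ℝ} (hR : 0 < R) :
    ∫⁻ z in closedBall (0 : E) R, ENNReal.ofReal ‖z‖⁻¹ ∂μ
      = ENNReal.ofReal (R ^ (finrank ℝ E - 1)) *
          ∫⁻ z in closedBall (0 : E) 1, ENNReal.ofReal ‖z‖⁻¹ ∂μ := by
  set k : ℝ → E → ℝ≥0∞ := fun ρ => (closedBall (0 : E) ρ).indicator fun z => ENNReal.ofReal ‖z‖⁻¹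
  have hk : ∀ ρ, Measurable (k ρ) := fun ρ => (by fun_prop : Measurable fun z : E =>
    ENNReal.ofReal ‖z‖⁻¹).indicator measurableSet_closedBall
  have hscale : ∀ w : E, k R (R • w) = ENNReal.ofReal R⁻¹ * k 1 w := by
    intro w
    simp only [k, indicator, mem_closedBall_zero_iff, norm_smul, Real.norm_of_nonneg hR.le,
      mul_le_iff_le_one_right hR, mul_inv, ENNReal.ofReal_mul (inv_nonneg.2 hR.le)]
    split_ifs <;> simp
  have hmap : Measure.map (R • ·) μ = ENNReal.ofReal (R ^ finrank ℝ E)⁻¹ • μ := by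
    rw [Measure.map_addHaar_smul μ hR.ne', abs_of_pos (by positivity)]
  have hpow : R ^ finrank ℝ E = R ^ (finrank ℝ E - 1) * R := by
    rw [← pow_succ, Nat.sub_add_cancel finrank_pos]
  calc ∫⁻ z in closedBall (0 : E) R, ENNReal.ofReal ‖z‖⁻¹ ∂μ
      = ENNReal.ofReal (R ^ finrank ℝ E) * ∫⁻ z, k R z ∂Measure.map (R • ·) μ := by
        rw [hmap, lintegral_smul_measure, smul_eq_mul, ← mul_assoc,
          ← ENNReal.ofReal_mul (by positivity), mul_inv_cancel₀ (by positivity),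
          ENNReal.ofReal_one, one_mul, lintegral_indicator measurableSet_closedBall]
    _ = ENNReal.ofReal (R ^ finrank ℝ E) * ∫⁻ w, ENNReal.ofReal R⁻¹ * k 1 w ∂μ := by
        rw [lintegral_map (hk R) (measurable_const_smul R)]
        simp_rw [hscale]
    _ = _ := by
        rw [lintegral_const_mul _ (hk 1), lintegral_indicator measurableSet_closedBall,
          ← mul_assoc, ← ENNReal.ofReal_mul (by positivity), hpow, mul_assoc,
          mul_inv_cancel₀ hR.ne', mul_one]

theorem lintegral_closedBall_ofReal_inv_norm_lt_top [NormedSpace ℝ E] [FiniteDimensional ℝ E]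
    (hE : 2 ≤ finrank ℝ E) (μ : Measure E) [μ.IsAddHaarMeasure] (R : ℝ) :
    ∫⁻ z in closedBall (0 : E) R, ENNReal.ofReal ‖z‖⁻¹ ∂μ < ∞ := by
  have : Nontrivial E := Module.nontrivial_of_finrank_pos (R := ℝ) (by omega)
  have hint : IntegrableOn (fun z : E => ‖z‖⁻¹) (ball 0 (R + 1)) μ := by
    rw [integrableOn_fun_norm_addHaar]
    refine ((continuous_pow (finrank ℝ E - 2)).integrableOn_Icc.mono_set
      Ioo_subset_Icc_self).congr_fun (fun y hy => ?_) measurableSet_Ioo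
    rw [smul_eq_mul, show finrank ℝ E - 1 = finrank ℝ E - 2 + 1 by omega, pow_succ, mul_assoc,
      mul_inv_cancel₀ hy.1.ne', mul_one]
  calc ∫⁻ z in closedBall (0 : E) R, ENNReal.ofReal ‖z‖⁻¹ ∂μ
      ≤ ∫⁻ z in ball (0 : E) (R + 1), ENNReal.ofReal ‖z‖⁻¹ ∂μ :=
        lintegral_mono_set (closedBall_subset_ball (lt_add_one R))
    _ < ∞ := hint.lintegral_lt_top

noncomputable def invNormSegmentMeasure (μ : Measure E) (R : ℝ) : Measure (E × ℝ) :=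
  ((μ.restrict (closedBall 0 R)).prod (volume.restrict (Ioc (0 : ℝ) 1))).withDensity
    fun y => ENNReal.ofReal ‖y.1‖⁻¹

instance (μ : Measure E) [SFinite μ] (R : ℝ) : SFinite (invNormSegmentMeasure μ R) := by
  rw [invNormSegmentMeasure]
  infer_instance

theorem invNormSegmentMeasure_univ (μ : Measure E) [SFinite μ] (R : ℝ) :
    invNormSegmentMeasure μ R univ = ∫⁻ z in closedBall (0 : E) R, ENNReal.ofReal ‖z‖⁻¹ ∂μ := by
  rw [invNormSegmentMeasure, withDensity_apply _ MeasurableSet.univ, Measure.restrict_univ,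
    lintegral_prod _ (by fun_prop)]
  simp

theorem ContDiff.enorm_setIntegral_closedBall_le [NormedSpace ℝ E] [FiniteDimensional ℝ E]
    {F : Type*} [NormedAddCommGroup F]
    [NormedSpace ℝ F] [CompleteSpace F] {u : E → F} (hu : ContDiff ℝ 1 u) (μ : Measure E)
    [SFinite μ] (R : ℝ) (x : E) :
    ‖∫ z in closedBall (0 : E) R, ‖u (x + z) - u x‖ ^ 2 / ‖z‖ ^ 3 ∂μ‖ₑ ≤
      ∫⁻ y, ‖fderiv ℝ u (x + y.2 • y.1)‖ₑ ^ 2 ∂invNormSegmentMeasure μ R := by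
  have hg : Measurable fun y : E × ℝ => ‖fderiv ℝ u (x + y.2 • y.1)‖ₑ ^ 2 :=
    ((ENNReal.continuous_pow 2).comp (hu.continuous_fderiv one_ne_zero).enorm).measurable.comp
      (by fun_prop)
  calc ‖∫ z in closedBall (0 : E) R, ‖u (x + z) - u x‖ ^ 2 / ‖z‖ ^ 3 ∂μ‖ₑ
      ≤ ∫⁻ z in closedBall (0 : E) R, ENNReal.ofReal (‖u (x + z) - u x‖ ^ 2 / ‖z‖ ^ 3) ∂μ :=
        (enorm_integral_le_lintegral_enorm _).trans_eq
          (lintegral_congr fun z => Real.enorm_of_nonneg (by positivity))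
    _ ≤ ∫⁻ z in closedBall (0 : E) R, ENNReal.ofReal ‖z‖⁻¹ *
          (∫⁻ t in Ioc (0 : ℝ) 1, ‖fderiv ℝ u (x + t • z)‖ₑ ^ 2) ∂μ :=
        lintegral_mono fun z => hu.ofReal_norm_map_add_sub_sq_div_cube_le x z
    _ = _ := by
        rw [invNormSegmentMeasure, lintegral_withDensity_eq_lintegral_mul _ (by fun_prop) hg,
          lintegral_prod _ (by fun_prop)]
        exact lintegral_congr fun z => (lintegral_const_mul _ (hg.comp measurable_prodMk_left)).symm

end InvNormKernel

theorem stmt_12 (q : ℝ≥0∞) (hq : 1 < q) :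
    ∃ C : ℝ≥0, 0 < C ∧
      ∀ (u : EuclideanSpace ℝ (Fin 3) → EuclideanSpace ℝ (Fin 3)) (r M : ℝ),
        0 < r → ContDiff ℝ 1 u → (∀ x, ‖fderiv ℝ u x‖ ≤ M) →
        eLpNorm (fun x => ∫ z in closedBall (0 : EuclideanSpace ℝ (Fin 3)) (2 * r),
            ‖u (x + z) - u x‖ ^ 2 / ‖z‖ ^ 3) q volume
          ≤ (C : ℝ≥0∞) * ENNReal.ofReal (r ^ 2) *
              eLpNorm (fun x => ‖fderiv ℝ u x‖) (2 * q) volume ^ 2 := by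
  set I := ∫⁻ z in closedBall (0 : EuclideanSpace ℝ (Fin 3)) 1, ENNReal.ofReal ‖z‖⁻¹
  have hI : I < ∞ := lintegral_closedBall_ofReal_inv_norm_lt_top (by simp) volume 1
  refine ⟨4 * I.toNNReal + 1, by positivity, fun u r M hr hu _ => ?_⟩
  set ν := invNormSegmentMeasure (volume : Measure (EuclideanSpace ℝ (Fin 3))) (2 * r)
  have hν : ν univ ≤ (4 * I.toNNReal + 1 : ℝ≥0) * ENNReal.ofReal (r ^ 2) := by
    rw [invNormSegmentMeasure_univ, lintegral_closedBall_ofReal_inv_norm_eq volume (by positivity),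
      finrank_euclideanSpace_fin, show (2 * r) ^ (3 - 1) = 4 * r ^ 2 by ring,
      ENNReal.ofReal_mul (by norm_num), ENNReal.ofReal_ofNat]
    push_cast
    rw [ENNReal.coe_toNNReal hI.ne, mul_right_comm]
    gcongr
    exact le_self_add
  have hF : Continuous fun x => ‖fderiv ℝ u x‖ₑ ^ 2 :=
    (ENNReal.continuous_pow 2).comp (hu.continuous_fderiv one_ne_zero).enorm
  calc _ ≤ eLpNorm (fun x => ∫⁻ y, ‖fderiv ℝ u (x + y.2 • y.1)‖ₑ ^ 2 ∂ν) q volume :=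
        eLpNorm_mono_enorm fun x => (hu.enorm_setIntegral_closedBall_le volume (2 * r) x).trans_eq
          (enorm_eq_self _).symm
    _ ≤ ν univ * eLpNorm (fun x => ‖fderiv ℝ u x‖ₑ ^ 2) q volume :=
        hF.eLpNorm_lintegral_comp_add_le (by fun_prop) hq.le
    _ ≤ _ := by rw [eLpNorm_enorm_sq, ← eLpNorm_norm]; gcongr
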